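/- Let Ω ⊂ ℝ³ be a bounded convex open set and c > 0, λ a continuous nontrivial causal signal. Suppose u(x,t) = Σ_{j=1}^{M} a_j λ(t − c⁻¹|x − s_j|)/(4π|x − s_j|) with distinct s_j ∈ Ω and a_j > 0, and suppose sampling points z₁, …, z_{N_z} ∈ Ω (distinct) and constants c(z_l) ∈ ℝ satisfy Σ_l c(z_l) λ(t − c⁻¹|x − z_l|)/(4π|x − z_l|) = u(x,t) for all x ∈ ∂Ω and t ∈ ℝ. Then {s₁,…,s_M} ⊆ {z₁,…,z_{N_z}}, and c(z_l) = a_j whenever z_l = s_j while c(z_l) = 0 whenever z_l ∉ {s₁,…,s_M}. -/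

import Mathlib

/-!
Pick a point `x ∈ ∂Ω` from which all the points `s j` and `z l` are at pairwise different
distances. It exists by Baire's theorem on `∂Ω`: a perpendicular bisector of two
points of `Ω` is a proper affine subspace `S` through `Ω`, and radial projection from a point
`w ∈ S ∩ Ω` shows that `S ∩ ∂Ω` has empty interior in `∂Ω`. At `x`, both expansions are linear
combinations of the translates `λ(· - c⁻¹‖x - p‖)`, which have pairwise different delays. Since
`λ` vanishes on a half-line, such translates are linearly independent (near its onset, only the
earliest translate is nonzero), so both expansions carry the same coefficient at every point `p`.
-/

open Real Set Filter Topology Function Bornology Finsupp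

theorem linearIndependent_translate {f : ℝ → ℝ} (hbdd : BddBelow (support f))
    (hf : (support f).Nonempty) :
    LinearIndependent ℝ (fun d t => f (t - d)) := by
  rw [linearIndependent_iff]
  intro l hl
  by_contra hl0
  have hne : l.support.Nonempty := support_nonempty_iff.2 hl0
  set d₀ := l.support.min' hne
  set T := sInf (support f)
  have hleft : ∀ t < T, f t = 0 := fun t ht => notMem_support.1 (notMem_of_lt_csInf ht hbdd)
  have hfreq : ∃ᶠ t in 𝓝 T, f t ≠ 0 := mem_closure_iff_frequently.1 (csInf_mem_closure hf hbdd)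
  have hev : ∀ᶠ t in 𝓝 T, ∀ d ∈ l.support.erase d₀, t < T + (d - d₀) := by
    refine (eventually_all_finset _).2 fun d hd => eventually_lt_nhds ?_
    linarith [l.support.min'_lt_of_mem_erase_min' hne hd]
  -- at time `t + d₀`, only the translate by the earliest delay `d₀` can be nonzero
  obtain ⟨t, hft, ht⟩ := (hfreq.and_eventually hev).exists
  have hsum := congr_fun hl (t + d₀)
  rw [linearCombination_apply, Finsupp.sum, Finset.sum_apply,
    Finset.sum_eq_single_of_mem d₀ (l.support.min'_mem hne)] at hsum
  · simp only [Pi.smul_apply, smul_eq_mul, add_sub_cancel_right, Pi.zero_apply] at hsum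
    exact hft ((mul_eq_zero.1 hsum).resolve_left (mem_support_iff.1 (l.support.min'_mem hne)))
  · intro d hd hdd
    rw [Pi.smul_apply, hleft _ (by linarith [ht d (Finset.mem_erase.2 ⟨hdd, hd⟩)]), smul_zero]

theorem Finsupp.mapDomain_mem_supported {R M α β : Type*} [Semiring R] [AddCommMonoid M]
    [Module R M] {f : α → β} {P : Set β} (hf : range f ⊆ P) (c : α →₀ M) :
    mapDomain f c ∈ supported M R P :=
  (mem_supported' R _).2 fun _ hy => mapDomain_of_notMem_range _ _ fun hy' => hy (hf hy')

theorem LinearIndepOn.mapDomain_eq_of_sum_smul_eq {R M α ι κ : Type*} [Ring R] [AddCommGroup M]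
    [Module R M] [Fintype ι] [Fintype κ] {v : α → M} {P : Set α} (hv : LinearIndepOn R v P)
    {s : ι → α} {z : κ → α} (hs : range s ⊆ P) (hz : range z ⊆ P) {a : ι → R} {b : κ → R}
    (h : ∑ j, a j • v (s j) = ∑ l, b l • v (z l)) :
    mapDomain s (equivFunOnFinite.symm a) = mapDomain z (equivFunOnFinite.symm b) := by
  refine linearIndepOn_iffₛ.1 hv _ (mapDomain_mem_supported hs _) _
    (mapDomain_mem_supported hz _) ?_
  have hs' := linearCombination_eq_fintype_linearCombination_apply R (v ∘ s) a
  have hz' := linearCombination_eq_fintype_linearCombination_apply R (v ∘ z) b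
  rw [Fintype.linearCombination_apply] at hs' hz'
  rw [linearCombination_mapDomain, linearCombination_mapDomain]
  exact hs'.trans (h.trans hz'.symm)

theorem preimage_add_left_mem_nhds_zero {G : Type*} [TopologicalSpace G] [AddZeroClass G]
    [ContinuousAdd G] {U : Set G} {w : G} (hU : U ∈ 𝓝 w) : (w + ·) ⁻¹' U ∈ 𝓝 0 :=
  (continuous_const_add w).continuousAt.preimage_mem_nhds (by simpa using hU)

section RayExit

variable {E : Type*} [NormedAddCommGroup E] [NormedSpace ℝ E] {Ω : Set E} {w : E}

-- radial projection from `w` onto `∂Ω`, along the direction `d`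
noncomputable def rayExit (Ω : Set E) (w d : E) : E :=
  w + (gauge ((w + ·) ⁻¹' Ω) d)⁻¹ • d

theorem gauge_preimage_add_left_eq_one_iff (hΩo : IsOpen Ω) (hΩc : Convex ℝ Ω) (hw : w ∈ Ω)
    {d : E} : gauge ((w + ·) ⁻¹' Ω) d = 1 ↔ w + d ∈ frontier Ω := by
  rw [gauge_eq_one_iff_mem_frontier (hΩc.translate_preimage_right w)
    (preimage_add_left_mem_nhds_zero (hΩo.mem_nhds hw))]
  exact Iff.of_eq (congrArg (d ∈ ·) ((Homeomorph.addLeft w).preimage_frontier Ω).symm)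

theorem gauge_preimage_add_left_pos (hΩo : IsOpen Ω) (hΩb : IsBounded Ω) (hw : w ∈ Ω) {d : E}
    (hd : d ≠ 0) : 0 < gauge ((w + ·) ⁻¹' Ω) d :=
  (gauge_pos (absorbent_nhds_zero (preimage_add_left_mem_nhds_zero (hΩo.mem_nhds hw)))
    ((NormedSpace.isVonNBounded_iff ℝ).2
      ((IsometryEquiv.addLeft w).isometry.antilipschitz.isBounded_preimage hΩb))).2 hd

theorem rayExit_mem_frontier (hΩo : IsOpen Ω) (hΩc : Convex ℝ Ω) (hΩb : IsBounded Ω)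
    (hw : w ∈ Ω) {d : E} (hd : d ≠ 0) : rayExit Ω w d ∈ frontier Ω := by
  have hpos := gauge_preimage_add_left_pos hΩo hΩb hw hd
  rw [rayExit, ← gauge_preimage_add_left_eq_one_iff hΩo hΩc hw,
    gauge_smul_of_nonneg (inv_nonneg.2 hpos.le), smul_eq_mul, inv_mul_cancel₀ hpos.ne']

theorem rayExit_sub_self (hΩo : IsOpen Ω) (hΩc : Convex ℝ Ω) (hw : w ∈ Ω) {b : E}
    (hb : b ∈ frontier Ω) : rayExit Ω w (b - w) = b := by
  rw [rayExit, (gauge_preimage_add_left_eq_one_iff hΩo hΩc hw).2 (by simpa using hb), inv_one,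
    one_smul, add_sub_cancel]

theorem continuousAt_rayExit (hΩo : IsOpen Ω) (hΩc : Convex ℝ Ω) (hΩb : IsBounded Ω)
    (hw : w ∈ Ω) {d : E} (hd : d ≠ 0) : ContinuousAt (rayExit Ω w) d :=
  continuousAt_const.add ((((continuous_gauge (hΩc.translate_preimage_right w)
    (preimage_add_left_mem_nhds_zero (hΩo.mem_nhds hw))).continuousAt).inv₀
    (gauge_preimage_add_left_pos hΩo hΩb hw hd).ne').smul continuousAt_id)

theorem rayExit_mem_affineSubspace_iff (hΩo : IsOpen Ω) (hΩb : IsBounded Ω) (hw : w ∈ Ω)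
    {S : AffineSubspace ℝ E} (hwS : w ∈ S) {d : E} (hd : d ≠ 0) :
    rayExit Ω w d ∈ S ↔ d ∈ S.direction := by
  rw [rayExit, add_comm, ← vadd_eq_add, AffineSubspace.vadd_mem_iff_mem_direction _ hwS,
    Submodule.smul_mem_iff _ (inv_ne_zero (gauge_preimage_add_left_pos hΩo hΩb hw hd).ne')]

end RayExit

section Frontier

variable {E : Type*} [NormedAddCommGroup E] [NormedSpace ℝ E] {Ω : Set E}

theorem frontier_subset_closure_frontier_diff (hΩo : IsOpen Ω) (hΩc : Convex ℝ Ω)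
    (hΩb : IsBounded Ω) {S : AffineSubspace ℝ E} (hS : S ≠ ⊤)
    (hSΩ : ((S : Set E) ∩ Ω).Nonempty) :
    frontier Ω ⊆ closure (frontier Ω \ S) := by
  obtain ⟨w, hwS, hwΩ⟩ := hSΩ
  intro b hb
  by_cases hbS : b ∈ S
  swap
  · exact subset_closure ⟨hb, hbS⟩
  obtain ⟨n, hn⟩ : ∃ n, n ∉ S.direction := by
    by_contra! h
    exact hS ((AffineSubspace.direction_eq_top_iff_of_nonempty ⟨w, hwS⟩).1
      (eq_top_iff.2 fun n _ => h n))
  have hbw : b - w ≠ 0 := sub_ne_zero.2 fun h => (hΩo.frontier_eq ▸ hb).2 (h ▸ hwΩ)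
  have hbw_mem : b - w ∈ S.direction := AffineSubspace.vsub_mem_direction hbS hwS
  -- tilting the ray from `w` through `b` off `S.direction` moves its exit point off `S`
  set d : ℝ → E := fun ε => b - w + ε • n
  have hd : Tendsto d (𝓝 0) (𝓝 (b - w)) :=
    (continuous_const.add (continuous_id.smul continuous_const)).tendsto' 0 _ (by simp)
  refine mem_closure_of_tendsto (f := rayExit Ω w ∘ d) (b := 𝓝[≠] 0) ?_ ?_
  · rw [← rayExit_sub_self hΩo hΩc hwΩ hb]
    exact (continuousAt_rayExit hΩo hΩc hΩb hwΩ hbw).tendsto.comp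
      (hd.mono_left nhdsWithin_le_nhds)
  · filter_upwards [self_mem_nhdsWithin, nhdsWithin_le_nhds (hd.eventually_ne hbw)]
      with ε hε hdε
    refine ⟨rayExit_mem_frontier hΩo hΩc hΩb hwΩ hdε, ?_⟩
    rw [comp_apply, SetLike.mem_coe, rayExit_mem_affineSubspace_iff hΩo hΩb hwΩ hwS hdε,
      Submodule.add_mem_iff_right _ hbw_mem, Submodule.smul_mem_iff _ hε]
    exact hn

theorem exists_mem_frontier_forall_notMem [FiniteDimensional ℝ E] [Nontrivial E] {ι : Type*}
    [Countable ι] (hΩo : IsOpen Ω) (hΩc : Convex ℝ Ω) (hΩb : IsBounded Ω) (hne : Ω.Nonempty)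
    {S : ι → AffineSubspace ℝ E} (hS : ∀ i, S i ≠ ⊤)
    (hSΩ : ∀ i, ((S i : Set E) ∩ Ω).Nonempty) :
    ∃ x ∈ frontier Ω, ∀ i, x ∉ S i := by
  obtain ⟨w, hw⟩ := hne
  obtain ⟨d, hd⟩ := exists_ne (0 : E)
  have : Nonempty (frontier Ω) := ⟨⟨_, rayExit_mem_frontier hΩo hΩc hΩb hw hd⟩⟩
  have : CompleteSpace (frontier Ω) := isClosed_frontier.completeSpace_coe
  have hdense : Dense (⋂ i, {x : frontier Ω | (x : E) ∉ S i}) := by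
    refine dense_iInter_of_isOpen (fun i => ?_) (fun i => ?_)
    · exact (S i).closed_of_finiteDimensional.isOpen_compl.preimage continuous_subtype_val
    · rw [Subtype.dense_iff]
      convert frontier_subset_closure_frontier_diff hΩo hΩc hΩb (hS i) (hSΩ i) using 2
      ext x
      simp [and_comm]
  obtain ⟨⟨x, hx⟩, hxS⟩ := hdense.nonempty
  exact ⟨x, hx, mem_iInter.1 hxS⟩

end Frontier

theorem exists_mem_frontier_injOn_dist {E : Type*} [NormedAddCommGroup E]
    [InnerProductSpace ℝ E] [FiniteDimensional ℝ E] [Nontrivial E] {Ω : Set E}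
    (hΩo : IsOpen Ω) (hΩc : Convex ℝ Ω) (hΩb : IsBounded Ω) (hne : Ω.Nonempty) {P : Set E}
    (hP : P.Countable) (hPΩ : P ⊆ Ω) :
    ∃ x ∈ frontier Ω, InjOn (dist x) P := by
  have : Countable ↥(P ×ˢ P \ diagonal E) := ((hP.prod hP).mono sdiff_subset).to_subtype
  obtain ⟨x, hx, hxS⟩ := exists_mem_frontier_forall_notMem hΩo hΩc hΩb hne
    (S := fun pq : ↥(P ×ˢ P \ diagonal E) => AffineSubspace.perpBisector pq.1.1 pq.1.2)
    (fun pq => AffineSubspace.perpBisector_eq_top.not.2 pq.2.2)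
    (fun pq => ⟨_, AffineSubspace.midpoint_mem_perpBisector _ _,
      hΩc.midpoint_mem (hPΩ pq.2.1.1) (hPΩ pq.2.1.2)⟩)
  refine ⟨x, hx, fun p hp q hq hpq => by_contra fun hpq' => hxS ⟨(p, q), ⟨hp, hq⟩, hpq'⟩ ?_⟩
  exact AffineSubspace.mem_perpBisector_iff_dist_eq.2 hpq

noncomputable def retardedPotential {E : Type*} [NormedAddCommGroup E] (lam : ℝ → ℝ) (c : ℝ)
    (p x : E) (t : ℝ) : ℝ :=
  lam (t - c⁻¹ * ‖x - p‖) / (4 * π * ‖x - p‖)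

theorem linearIndepOn_retardedPotential {E : Type*} [NormedAddCommGroup E] {lam : ℝ → ℝ}
    (hbdd : BddBelow (support lam)) (hlam : (support lam).Nonempty) {c : ℝ} (hc : c ≠ 0)
    {x : E} {P : Set E} (hxP : x ∉ P) (hP : InjOn (dist x) P) :
    LinearIndepOn ℝ (fun p => retardedPotential lam c p x) P := by
  have hdelay : InjOn (fun p => c⁻¹ * ‖x - p‖) P := fun p hp q hq h =>
    hP hp hq (by simpa [dist_eq_norm, hc] using h)
  have hden (p : P) : 4 * π * ‖x - p‖ ≠ 0 := by
    have : x - p ≠ 0 := sub_ne_zero.2 fun h => hxP (h ▸ p.2)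
    positivity
  have := (((linearIndependent_translate hbdd hlam).linearIndepOn _).comp_of_image
    hdelay).units_smul fun p => (Units.mk0 _ (hden p))⁻¹
  unfold LinearIndepOn
  convert this using 1
  ext p t
  simp [retardedPotential, Units.smul_def, div_eq_inv_mul]

theorem stmt_9_general (Ω : Set (EuclideanSpace ℝ (Fin 3)))
    (hΩo : IsOpen Ω) (hΩc : Convex ℝ Ω) (hΩb : Bornology.IsBounded Ω)
    (c : ℝ) (hc : 0 < c) (lam : ℝ → ℝ)
    (hcausal : ∀ t < 0, lam t = 0) (hnt : ∃ t, lam t ≠ 0)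
    (M Nz : ℕ) (hM : 0 < M)
    (s : Fin M → EuclideanSpace ℝ (Fin 3)) (hsΩ : ∀ j, s j ∈ Ω)
    (hsi : Function.Injective s) (a : Fin M → ℝ) (ha : ∀ j, 0 < a j)
    (z : Fin Nz → EuclideanSpace ℝ (Fin 3)) (hzΩ : ∀ l, z l ∈ Ω)
    (hzi : Function.Injective z) (cc : Fin Nz → ℝ)
    (hfit : ∀ x ∈ frontier Ω, ∀ t : ℝ,
      ∑ l : Fin Nz, cc l * lam (t - c⁻¹ * ‖x - z l‖) / (4 * π * ‖x - z l‖) =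
      ∑ j : Fin M, a j * lam (t - c⁻¹ * ‖x - s j‖) / (4 * π * ‖x - s j‖)) :
    (Set.range s ⊆ Set.range z) ∧
    (∀ l : Fin Nz, (∀ j : Fin M, z l = s j → cc l = a j) ∧
      (z l ∉ Set.range s → cc l = 0)) := by
  have hPΩ : range s ∪ range z ⊆ Ω :=
    union_subset (range_subset_iff.2 hsΩ) (range_subset_iff.2 hzΩ)
  obtain ⟨x, hx, hdist⟩ := exists_mem_frontier_injOn_dist hΩo hΩc hΩb ⟨_, hsΩ ⟨0, hM⟩⟩
    ((countable_range s).union (countable_range z)) hPΩ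
  have hxP : x ∉ range s ∪ range z := fun h => (hΩo.frontier_eq ▸ hx).2 (hPΩ h)
  have hbdd : BddBelow (support lam) := ⟨0, fun t ht => not_lt.1 fun h => ht (hcausal t h)⟩
  have hcoeff : mapDomain s (equivFunOnFinite.symm a) = mapDomain z (equivFunOnFinite.symm cc) := by
    refine (linearIndepOn_retardedPotential hbdd hnt hc.ne' hxP hdist).mapDomain_eq_of_sum_smul_eq
      subset_union_left subset_union_right ?_
    ext t
    simpa [retardedPotential, mul_div_assoc] using (hfit x hx t).symm
  have hs_apply (j : Fin M) : mapDomain s (equivFunOnFinite.symm a) (s j) = a j :=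
    mapDomain_apply hsi _ j
  have hz_apply (l : Fin Nz) : mapDomain z (equivFunOnFinite.symm cc) (z l) = cc l :=
    mapDomain_apply hzi _ l
  refine ⟨range_subset_iff.2 fun j => ?_, fun l => ⟨fun j hlj => ?_, fun hl => ?_⟩⟩
  · by_contra hj
    exact (ha j).ne' (by rw [← hs_apply, hcoeff, mapDomain_of_notMem_range _ _ hj])
  · rw [← hz_apply, ← hcoeff, hlj, hs_apply]
  · rw [← hz_apply, ← hcoeff, mapDomain_of_notMem_range _ _ hl]

/-- Proposition 2.4: the MMFS expansion recovers exactly the sources. -/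
theorem stmt_9 (Ω : Set (EuclideanSpace ℝ (Fin 3)))
    (hΩo : IsOpen Ω) (hΩc : Convex ℝ Ω) (hΩb : Bornology.IsBounded Ω)
    (c : ℝ) (hc : 0 < c) (lam : ℝ → ℝ) (hlc : Continuous lam)
    (hcausal : ∀ t < 0, lam t = 0) (hnt : ∃ t, lam t ≠ 0)
    (M Nz : ℕ) (hM : 0 < M) (hNz : 0 < Nz)
    (s : Fin M → EuclideanSpace ℝ (Fin 3)) (hsΩ : ∀ j, s j ∈ Ω)
    (hsi : Function.Injective s) (a : Fin M → ℝ) (ha : ∀ j, 0 < a j)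
    (z : Fin Nz → EuclideanSpace ℝ (Fin 3)) (hzΩ : ∀ l, z l ∈ Ω)
    (hzi : Function.Injective z) (cc : Fin Nz → ℝ)
    (hfit : ∀ x ∈ frontier Ω, ∀ t : ℝ,
      ∑ l : Fin Nz, cc l * lam (t - c⁻¹ * ‖x - z l‖) / (4 * π * ‖x - z l‖) =
      ∑ j : Fin M, a j * lam (t - c⁻¹ * ‖x - s j‖) / (4 * π * ‖x - s j‖)) :
    (Set.range s ⊆ Set.range z) ∧
    (∀ l : Fin Nz, (∀ j : Fin M, z l = s j → cc l = a j) ∧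
      (z l ∉ Set.range s → cc l = 0)) :=
  stmt_9_general Ω hΩo hΩc hΩb c hc lam hcausal hnt M Nz hM s hsΩ hsi a ha z hzΩ hzi cc hfit
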